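/- Fix η ∈ [0,1]. Consider the sequential qubit strategy where Alice's states are ρ_{00} = (𝟙 + (σx+σz)/√2)/2, ρ_{11} = (𝟙 − (σx+σz)/√2)/2, ρ_{01} = (𝟙 + (σx−σz)/√2)/2, ρ_{10} = (𝟙 − (σx−σz)/√2)/2; Bob's Kraus operators are K_{b|y} = √(M_{b|y}) with M_{b|0} = (𝟙 + (−1)^b η σx)/2 and M_{b|1} = (𝟙 + (−1)^b η σz)/2; and Charlie's POVM elements are C_{c|0} = (𝟙 + (−1)^c σx)/2 and C_{c|1} = (𝟙 + (−1)^c σz)/2. Then W_AB = (2 + √2·η)/4 and W_AC = (4 + √2 + √(2 − 2η²))/8. -/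

import Mathlib

/-!
Bob's Kraus operators are forced: `K_{b|y}` is the positive square root of `(1 ± η σ_y)/2`, which
acts as `√((1 ± η)/2)` and `√((1 ∓ η)/2)` on the eigenprojections `(1 ± σ_y)/2`. Summed over the
outcome `b`, the cross terms cancel and the instrument becomes the dephasing channel
`X ↦ (1 + c)/2 X + (1 - c)/2 σ_y X σ_y` with `c = √(1 - η²)`. Each `ρ_x` has Bloch components
`±1/√2` along `σx` and `σz` with signs matching `x`, so every Alice–Bob term is `(2 + √2 η)/4`.
Charlie's term is `(2 + √2)/4` on the undisturbed part, and on the dephased part the same when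
`y = z` but `(2 - √2)/4` when `y ≠ z`, because `σx` and `σz` anticommute.
-/

open Matrix ComplexOrder

noncomputable section

/-- The bit `x_y` of `x = (x₀, x₁)`. -/
def bit (x : Bool × Bool) (y : Bool) : Bool := if y then x.2 else x.1

/-- Alice–Bob witness `W_AB = (1/8) ∑_{x,y} tr[ρ_x K_{x_y|y}† K_{x_y|y}]`. -/
def WAB (ρ : Bool × Bool → Matrix (Fin 2) (Fin 2) ℂ)
    (K : Bool → Bool → Matrix (Fin 2) (Fin 2) ℂ) : ℝ :=
  (1 / 8) * ∑ x : Bool × Bool, ∑ y : Bool,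
    ((ρ x * ((K y (bit x y))ᴴ * K y (bit x y))).trace).re

/-- Alice–Charlie witness
`W_AC = (1/16) ∑_{x,y,b,z} tr[K_{b|y} ρ_x K_{b|y}† C_{x_z|z}]`. -/
def WAC (ρ : Bool × Bool → Matrix (Fin 2) (Fin 2) ℂ)
    (K C : Bool → Bool → Matrix (Fin 2) (Fin 2) ℂ) : ℝ :=
  (1 / 16) * ∑ x : Bool × Bool, ∑ y : Bool, ∑ b : Bool, ∑ z : Bool,
    ((K y b * ρ x * (K y b)ᴴ * C z (bit x z)).trace).re

/-- A sequential qubit strategy: four qubit states, two instruments (Kraus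
operators), and two binary POVMs. -/
def ValidStrategy (ρ : Bool × Bool → Matrix (Fin 2) (Fin 2) ℂ)
    (K C : Bool → Bool → Matrix (Fin 2) (Fin 2) ℂ) : Prop :=
  (∀ x, (ρ x).PosSemidef ∧ (ρ x).trace = 1) ∧
  (∀ y, (K y false)ᴴ * K y false + (K y true)ᴴ * K y true = 1) ∧
  (∀ z b, (C z b).PosSemidef) ∧
  (∀ z, C z false + C z true = 1)

/-- Pauli matrix σx. -/
def sigmaX : Matrix (Fin 2) (Fin 2) ℂ := !![0, 1; 1, 0]

/-- Pauli matrix σz. -/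
def sigmaZ : Matrix (Fin 2) (Fin 2) ℂ := !![1, 0; 0, -1]

/-- Alice's optimal preparations: a square in the x–z disk of the Bloch
sphere. -/
def rhoOpt : Bool × Bool → Matrix (Fin 2) (Fin 2) ℂ
  | (false, false) => (1 / 2 : ℂ) • (1 + ((Real.sqrt 2 : ℂ))⁻¹ • (sigmaX + sigmaZ))
  | (true, true) => (1 / 2 : ℂ) • (1 - ((Real.sqrt 2 : ℂ))⁻¹ • (sigmaX + sigmaZ))
  | (false, true) => (1 / 2 : ℂ) • (1 + ((Real.sqrt 2 : ℂ))⁻¹ • (sigmaX - sigmaZ))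
  | (true, false) => (1 / 2 : ℂ) • (1 - ((Real.sqrt 2 : ℂ))⁻¹ • (sigmaX - sigmaZ))

/-- Bob's unsharp POVM elements `M_{b|y} = (𝟙 + (−1)^b η σ)/2` with `σ = σx`
for `y = 0` and `σ = σz` for `y = 1`. -/
def Mopt (η : ℝ) (y b : Bool) : Matrix (Fin 2) (Fin 2) ℂ :=
  (1 / 2 : ℂ) • (1 + (if b then -(η : ℂ) else (η : ℂ)) • (if y then sigmaZ else sigmaX))

/-- Charlie's sharp measurements along σx and σz. -/
def Copt (z c : Bool) : Matrix (Fin 2) (Fin 2) ℂ :=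
  (1 / 2 : ℂ) • (1 + (if c then (-1 : ℂ) else 1) • (if z then sigmaZ else sigmaX))

section LuedersInstrument

variable {A : Type*}

section Algebra

variable [Ring A] [Algebra ℝ A] {e : ℝ}

def luedersKraus (S : A) (e : ℝ) : A :=
  √((1 + e) / 2) • ((2⁻¹ : ℝ) • (1 + S)) + √((1 - e) / 2) • ((2⁻¹ : ℝ) • (1 - S))

lemma luedersKraus_eq_smul_one_add_smul (S : A) (e : ℝ) :
    luedersKraus S e = ((√((1 + e) / 2) + √((1 - e) / 2)) / 2) • 1
      + ((√((1 + e) / 2) - √((1 - e) / 2)) / 2) • S := by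
  unfold luedersKraus
  module

lemma luedersKraus_neg_eq_smul_one_sub_smul (S : A) (e : ℝ) :
    luedersKraus S (-e) = ((√((1 + e) / 2) + √((1 - e) / 2)) / 2) • 1
      - ((√((1 + e) / 2) - √((1 - e) / 2)) / 2) • S := by
  rw [luedersKraus_eq_smul_one_add_smul, ← sub_eq_add_neg, sub_neg_eq_add]
  module

lemma smul_one_add_smul_mul_self {S : A} (hS : S * S = 1) (a b : ℝ) :
    (a • 1 + b • S) * (a • 1 + b • S) = (a ^ 2 + b ^ 2) • 1 + (2 * a * b) • S := by
  simp only [add_mul, mul_add, smul_mul_smul_comm, one_mul, mul_one, hS]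
  module

lemma smul_one_add_smul_conj_add_smul_one_sub_smul_conj (S X : A) (a b : ℝ) :
    (a • 1 + b • S) * X * (a • 1 + b • S) + (a • 1 - b • S) * X * (a • 1 - b • S)
      = (2 * a ^ 2) • X + (2 * b ^ 2) • (S * X * S) := by
  simp only [add_mul, mul_add, sub_mul, mul_sub, smul_mul_assoc, mul_smul_comm, one_mul, mul_one]
  module

lemma sqrt_half_one_add_mul_sqrt_half_one_sub (he : |e| ≤ 1) :
    √((1 + e) / 2) * √((1 - e) / 2) = √(1 - e ^ 2) / 2 := by
  obtain ⟨he₀, he₁⟩ := abs_le.mp he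
  rw [← Real.sqrt_mul (by linarith), show (1 + e) / 2 * ((1 - e) / 2) = (1 - e ^ 2) / 2 ^ 2 by ring,
    Real.sqrt_div' _ (by positivity), Real.sqrt_sq zero_le_two]

lemma luedersKraus_mul_self {S : A} (hS : S * S = 1) (he : |e| ≤ 1) :
    luedersKraus S e * luedersKraus S e = (2⁻¹ : ℝ) • (1 + e • S) := by
  obtain ⟨he₀, he₁⟩ := abs_le.mp he
  have hp := Real.sq_sqrt (show 0 ≤ (1 + e) / 2 by linarith)
  have hm := Real.sq_sqrt (show 0 ≤ (1 - e) / 2 by linarith)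
  rw [luedersKraus_eq_smul_one_add_smul, smul_one_add_smul_mul_self hS]
  match_scalars
  · linear_combination (hp + hm) / 2
  · linear_combination (hp - hm) / 2

lemma luedersKraus_conj_add_luedersKraus_neg_conj (S X : A) (he : |e| ≤ 1) :
    luedersKraus S e * X * luedersKraus S e + luedersKraus S (-e) * X * luedersKraus S (-e)
      = ((1 + √(1 - e ^ 2)) / 2) • X + ((1 - √(1 - e ^ 2)) / 2) • (S * X * S) := by
  obtain ⟨he₀, he₁⟩ := abs_le.mp he
  have hp := Real.sq_sqrt (show 0 ≤ (1 + e) / 2 by linarith)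
  have hm := Real.sq_sqrt (show 0 ≤ (1 - e) / 2 by linarith)
  have hpm := sqrt_half_one_add_mul_sqrt_half_one_sub he
  rw [luedersKraus_eq_smul_one_add_smul, luedersKraus_neg_eq_smul_one_sub_smul,
    smul_one_add_smul_conj_add_smul_one_sub_smul_conj]
  match_scalars
  · linear_combination (hp + hm) / 2 + hpm
  · linear_combination (hp + hm) / 2 - hpm

lemma isStarProjection_half_one_add [StarRing A] [StarModule ℝ A] {S : A}
    (hS : IsSelfAdjoint S) (hS2 : S * S = 1) : IsStarProjection ((2⁻¹ : ℝ) • (1 + S)) where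
  isIdempotentElem := by
    simp only [IsIdempotentElem, smul_mul_smul_comm, add_mul, mul_add, one_mul, mul_one, hS2]
    module
  isSelfAdjoint := (IsSelfAdjoint.all _).smul ((IsSelfAdjoint.one A).add hS)

end Algebra

section CStarAlgebra

variable [CStarAlgebra A] [PartialOrder A] [StarOrderedRing A] {S : A}

lemma luedersKraus_nonneg (hS : IsSelfAdjoint S) (hS2 : S * S = 1) (e : ℝ) :
    0 ≤ luedersKraus S e := by
  have hP := isStarProjection_half_one_add hS hS2
  have hQ := isStarProjection_half_one_add hS.neg (by rw [neg_mul_neg, hS2])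
  rw [← sub_eq_add_neg] at hQ
  exact add_nonneg (smul_nonneg (Real.sqrt_nonneg _) hP.nonneg)
    (smul_nonneg (Real.sqrt_nonneg _) hQ.nonneg)

lemma eq_luedersKraus_of_mul_self_eq (hS : IsSelfAdjoint S) (hS2 : S * S = 1) {e : ℝ}
    (he : |e| ≤ 1) {K : A} (hK : 0 ≤ K) (hKK : K * K = (2⁻¹ : ℝ) • (1 + e • S)) :
    K = luedersKraus S e :=
  (CFC.mul_self_eq_mul_self_iff K _ hK (luedersKraus_nonneg hS hS2 e)).mp
    (hKK.trans (luedersKraus_mul_self hS2 he).symm)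

end CStarAlgebra

end LuedersInstrument

lemma re_trace_smul_add_smul_conj_mul {n : Type*} [Fintype n] (ρ S C : Matrix n n ℂ) (α β : ℝ) :
    ((α • ρ + β • (S * ρ * S)) * C).trace.re
      = α * (ρ * C).trace.re + β * (ρ * (S * C * S)).trace.re := by
  have hcycle : (S * ρ * S * C).trace = (ρ * (S * C * S)).trace := by
    rw [mul_assoc, mul_assoc, trace_mul_comm, mul_assoc]
  simp [add_mul, hcycle]

def pauli (y : Bool) : Matrix (Fin 2) (Fin 2) ℂ := if y then sigmaZ else sigmaX

lemma isSelfAdjoint_pauli (y : Bool) : IsSelfAdjoint (pauli y) := by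
  cases y <;> ext i j <;> fin_cases i <;> fin_cases j <;> simp [pauli, sigmaX, sigmaZ]

lemma pauli_mul_self (y : Bool) : pauli y * pauli y = 1 := by
  cases y <;> ext i j <;> fin_cases i <;> fin_cases j <;> simp [pauli, sigmaX, sigmaZ, mul_apply]

lemma pauli_mul_pauli_mul_pauli (y z : Bool) :
    pauli y * pauli z * pauli y = if y = z then pauli z else -pauli z := by
  cases y <;> cases z <;> ext i j <;> fin_cases i <;> fin_cases j <;>
    simp [pauli, sigmaX, sigmaZ, mul_apply]

lemma pauli_conj_effect (y z : Bool) (t : ℝ) :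
    pauli y * ((2⁻¹ : ℝ) • (1 + t • pauli z)) * pauli y
      = (2⁻¹ : ℝ) • (1 + (if y = z then t else -t) • pauli z) := by
  simp only [mul_smul_comm, smul_mul_assoc, mul_add, add_mul, mul_one, pauli_mul_self,
    pauli_mul_pauli_mul_pauli]
  split_ifs <;> module

lemma Mopt_eq (η : ℝ) (y b : Bool) :
    Mopt η y b = (2⁻¹ : ℝ) • (1 + (if b then -η else η) • pauli y) := by
  cases b <;> simp [Mopt, pauli, ← Complex.coe_smul, one_div]

lemma Copt_eq_Mopt_one : Copt = Mopt 1 := by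
  ext z c : 2
  cases c <;> simp [Copt, Mopt]

open scoped MatrixOrder Matrix.Norms.L2Operator in
lemma eq_luedersKraus_of_mul_self_eq_Mopt {η : ℝ} (hη : |η| ≤ 1) {y b : Bool}
    {K : Matrix (Fin 2) (Fin 2) ℂ} (hK : K.PosSemidef) (hKK : K * K = Mopt η y b) :
    K = luedersKraus (pauli y) (if b then -η else η) :=
  eq_luedersKraus_of_mul_self_eq (isSelfAdjoint_pauli y) (pauli_mul_self y)
    (by cases b <;> simpa) hK.nonneg (hKK.trans (Mopt_eq η y b))

lemma re_trace_rhoOpt_mul_effect (x : Bool × Bool) (z : Bool) (t : ℝ) :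
    (rhoOpt x * (2⁻¹ : ℝ) • (1 + t • pauli z)).trace.re
      = (2 + √2 * (if bit x z then -t else t)) / 4 := by
  obtain ⟨_ | _, _ | _⟩ := x <;> cases z <;>
    simp [rhoOpt, pauli, bit, sigmaX, sigmaZ, trace_fin_two, mul_apply, ← Complex.coe_smul] <;>
    field_simp <;> ring_nf

lemma re_trace_rhoOpt_mul_Mopt_bit (η : ℝ) (x : Bool × Bool) (y : Bool) :
    (rhoOpt x * Mopt η y (bit x y)).trace.re = (2 + √2 * η) / 4 := by
  rw [Mopt_eq, re_trace_rhoOpt_mul_effect]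
  cases bit x y <;> simp

lemma re_trace_rhoOpt_mul_Copt_bit (x : Bool × Bool) (z : Bool) :
    (rhoOpt x * Copt z (bit x z)).trace.re = (2 + √2) / 4 := by
  rw [Copt_eq_Mopt_one, re_trace_rhoOpt_mul_Mopt_bit, mul_one]

lemma re_trace_rhoOpt_mul_pauli_conj_Copt_bit (x : Bool × Bool) (y z : Bool) :
    (rhoOpt x * (pauli y * Copt z (bit x z) * pauli y)).trace.re
      = (2 + √2 * (if y = z then 1 else -1)) / 4 := by
  rw [Copt_eq_Mopt_one, Mopt_eq, pauli_conj_effect, re_trace_rhoOpt_mul_effect]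
  cases bit x z <;> split_ifs <;> simp

lemma WAC_eq_sum_instrument (ρ : Bool × Bool → Matrix (Fin 2) (Fin 2) ℂ)
    (K C : Bool → Bool → Matrix (Fin 2) (Fin 2) ℂ) :
    WAC ρ K C = (1 / 16) * ∑ x, ∑ y, ∑ z,
      ((∑ b, K y b * ρ x * (K y b)ᴴ) * C z (bit x z)).trace.re := by
  unfold WAC
  congr 1
  refine Finset.sum_congr rfl fun x _ => Finset.sum_congr rfl fun y _ => ?_
  rw [Finset.sum_comm]
  simp only [Finset.sum_mul, trace_sum, Complex.re_sum]

theorem explicit_strategy_witness_values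
    (η : ℝ) (hη : η ∈ Set.Icc (0 : ℝ) 1)
    (K : Bool → Bool → Matrix (Fin 2) (Fin 2) ℂ)
    (hKpsd : ∀ y b, (K y b).PosSemidef)
    (hKsq : ∀ y b, K y b * K y b = Mopt η y b) :
    WAB rhoOpt K = (2 + Real.sqrt 2 * η) / 4 ∧
    WAC rhoOpt K Copt = (4 + Real.sqrt 2 + Real.sqrt (2 - 2 * η ^ 2)) / 8 := by
  have hη₁ : |η| ≤ 1 := abs_le.mpr ⟨by linarith [hη.1], hη.2⟩
  have hKherm : ∀ y b, (K y b)ᴴ = K y b := fun y b => (hKpsd y b).isHermitian.eq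
  have hK : ∀ y b, K y b = luedersKraus (pauli y) (if b then -η else η) := fun y b =>
    eq_luedersKraus_of_mul_self_eq_Mopt hη₁ (hKpsd y b) (hKsq y b)
  have hchannel : ∀ y X, ∑ b, K y b * X * (K y b)ᴴ = ((1 + √(1 - η ^ 2)) / 2) • X
      + ((1 - √(1 - η ^ 2)) / 2) • (pauli y * X * pauli y) := fun y X => by
    rw [Fintype.sum_bool, hKherm, hKherm, hK, hK, if_pos rfl, if_neg Bool.false_ne_true,
      add_comm, luedersKraus_conj_add_luedersKraus_neg_conj _ _ hη₁]
  constructor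
  · simp only [WAB, hKherm, hKsq, re_trace_rhoOpt_mul_Mopt_bit, Finset.sum_const,
      Finset.card_univ, Fintype.card_prod, Fintype.card_bool, nsmul_eq_mul]
    ring
  · rw [WAC_eq_sum_instrument]
    simp only [hchannel, re_trace_smul_add_smul_conj_mul, re_trace_rhoOpt_mul_Copt_bit,
      re_trace_rhoOpt_mul_pauli_conj_Copt_bit, Fintype.sum_bool, Bool.true_eq_false,
      Bool.false_eq_true, ↓reduceIte, Finset.sum_const, Finset.card_univ, Fintype.card_prod,
      Fintype.card_bool, nsmul_eq_mul]
    rw [show 2 - 2 * η ^ 2 = 2 * (1 - η ^ 2) by ring, Real.sqrt_mul zero_le_two]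
    ring

end
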